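/- Let $x_0,\ldots,x_t$ and $\beta$ be integers, and define $x_\nu := \beta + \min_{j_1+j_2=\nu-1,\ j_1,j_2\ge 0}(x_{j_1}+x_{j_2})$ for all $\nu \ge t+1$. Then the sequence of first differences $(x_{\nu+1}-x_\nu)_{\nu\ge 0}$ is eventually periodic with period length $p+1$, where $p\in\arg\min_{0\le j\le t}(x_j+\beta)/(j+1)$. -/

import Mathlib

/-!
Measure how far `x ν + β` lies above the line `(ν + 1) (x p + β) / (p + 1)` by the integer
`excess ν := (p + 1) (x ν + β) - (ν + 1) (x p + β)`.
The choice of `p` makes the excess nonnegative for `ν ≤ t`, and since the recursion splits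
`ν + 1` as `(j₁ + 1) + (j₂ + 1)`, an optimal split shows it stays nonnegative for all `ν`.
The split `j₁ = ν, j₂ = p` shows `excess (ν + p + 1) ≤ excess ν` for `ν ≥ t`. A nonnegative
integer sequence that eventually decreases along steps of `p + 1` eventually satisfies
`excess (ν + p + 1) = excess ν`, which says `x (ν + p + 1) = x ν + x p + β`.
-/

theorem Int.antitone_exists_forall_eq_of_bddBelow {g : ℕ → ℤ} (hg : Antitone g)
    (hb : BddBelow (Set.range g)) : ∃ M, ∀ n, M ≤ n → g n = g M := by
  obtain ⟨b, hb⟩ := hb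
  obtain ⟨_, ⟨M, rfl⟩, hM⟩ :=
    Int.exists_least_of_bdd (P := (· ∈ Set.range g)) ⟨b, fun _ hz => hb hz⟩ ⟨g 0, 0, rfl⟩
  exact ⟨M, fun n hn => le_antisymm (hg hn) (hM _ ⟨n, rfl⟩)⟩

theorem Int.exists_forall_add_eq_of_add_le {f : ℕ → ℤ} (hf : BddBelow (Set.range f)) {q N : ℕ}
    (hle : ∀ n, N ≤ n → f (n + q) ≤ f n) : ∃ M, ∀ n, M ≤ n → f (n + q) = f n := by
  obtain ⟨b, hb⟩ := hf
  -- The window sums decrease in `k`, so they are eventually constant.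
  set g : ℕ → ℤ := fun k => ∑ i ∈ Finset.range q, f (N + k + i)
  have hg_succ : ∀ k, g (k + 1) = g k + (f (N + k + q) - f (N + k)) := by
    intro k
    have h := Finset.sum_range_succ' (fun i => f (N + k + i)) q
    rw [Finset.sum_range_succ] at h
    simp only [g, ← add_assoc, add_right_comm _ 1, add_zero] at h ⊢
    linarith
  have hg_anti : Antitone g :=
    antitone_nat_of_succ_le fun k => by linarith [hg_succ k, hle (N + k) (Nat.le_add_right N k)]
  have hg_bdd : BddBelow (Set.range g) := by
    refine ⟨q • b, ?_⟩
    rintro _ ⟨k, rfl⟩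
    simpa [g] using Finset.card_nsmul_le_sum (Finset.range q) _ b fun i _ => hb ⟨N + k + i, rfl⟩
  obtain ⟨K, hK⟩ := Int.antitone_exists_forall_eq_of_bddBelow hg_anti hg_bdd
  refine ⟨N + K, fun n hn => ?_⟩
  obtain ⟨k, rfl⟩ := Nat.exists_eq_add_of_le hn
  have h := hg_succ (K + k)
  rw [hK (K + k + 1) (by omega), hK (K + k) (by omega)] at h
  simp only [← add_assoc] at h
  linarith

def excess (x : ℕ → ℤ) (β : ℤ) (p ν : ℕ) : ℤ :=
  ((p : ℤ) + 1) * (x ν + β) - ((ν : ℤ) + 1) * (x p + β)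

theorem excess_self (x : ℕ → ℤ) (β : ℤ) (p : ℕ) : excess x β p p = 0 := by
  unfold excess; ring

theorem excess_add_add_one (x : ℕ → ℤ) (β : ℤ) (p i k : ℕ) :
    excess x β p (i + k + 1) =
      excess x β p i + excess x β p k + ((p : ℤ) + 1) * (x (i + k + 1) - (β + (x i + x k))) := by
  unfold excess; push_cast; ring

section Recursion

variable {t : ℕ} {β : ℤ} {x : ℕ → ℤ}

theorem excess_nonneg
    (hrec : ∀ ν : ℕ, ∀ hν : t + 1 ≤ ν,
      x ν = β + (Finset.range ν).inf' (Finset.nonempty_range_iff.mpr (Nat.ne_zero_of_lt hν))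
        (fun j => x j + x (ν - 1 - j)))
    {p : ℕ} (hmin : ∀ j : ℕ, j ≤ t → ((x p : ℚ) + β) / (p + 1) ≤ ((x j : ℚ) + β) / (j + 1))
    (ν : ℕ) : 0 ≤ excess x β p ν := by
  induction ν using Nat.strong_induction_on with
  | _ ν ih =>
    by_cases hν : ν ≤ t
    · have h := hmin ν hν
      rw [div_le_div_iff₀ (by positivity) (by positivity)] at h
      unfold excess
      exact_mod_cast (by linarith : (0 : ℚ) ≤ ((p : ℚ) + 1) * (x ν + β) - (ν + 1) * (x p + β))
    · obtain ⟨j, hj, hxj⟩ := Finset.exists_mem_eq_inf' (Finset.nonempty_range_iff.mpr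
        (show ν ≠ 0 by omega)) (fun j => x j + x (ν - 1 - j))
      have hj : j < ν := Finset.mem_range.mp hj
      obtain ⟨k, rfl⟩ : ∃ k, ν = j + k + 1 := ⟨ν - 1 - j, by omega⟩
      have hsplit : x (j + k + 1) = β + (x j + x k) := by
        rw [hrec _ (by omega), hxj]; simp
      rw [excess_add_add_one, hsplit, sub_self, mul_zero, add_zero]
      exact add_nonneg (ih j hj) (ih k (by omega))

theorem excess_add_le
    (hrec : ∀ ν : ℕ, ∀ hν : t + 1 ≤ ν,
      x ν = β + (Finset.range ν).inf' (Finset.nonempty_range_iff.mpr (Nat.ne_zero_of_lt hν))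
        (fun j => x j + x (ν - 1 - j)))
    (p : ℕ) {ν : ℕ} (hν : t ≤ ν) : excess x β p (ν + (p + 1)) ≤ excess x β p ν := by
  have hle : x (ν + p + 1) ≤ β + (x ν + x p) := by
    rw [hrec _ (by omega)]
    have := Finset.inf'_le (fun j => x j + x (ν + p + 1 - 1 - j))
      (Finset.mem_range.mpr (show ν < ν + p + 1 by omega))
    simp only [show ν + p + 1 - 1 - ν = p by omega] at this
    linarith
  rw [← add_assoc, excess_add_add_one, excess_self]
  linarith [mul_nonpos_of_nonneg_of_nonpos (by positivity : (0 : ℤ) ≤ p + 1) (sub_nonpos.mpr hle)]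

end Recursion

theorem stmt2 (t : ℕ) (β : ℤ) (x : ℕ → ℤ)
    (hrec : ∀ ν : ℕ, ∀ _hν : t + 1 ≤ ν,
      x ν = β + (Finset.range ν).inf' (Finset.nonempty_range_iff.mpr (by omega))
        (fun j => x j + x (ν - 1 - j)))
    (p : ℕ)
    (hmin : ∀ j : ℕ, j ≤ t → ((x p : ℚ) + β) / (p + 1) ≤ ((x j : ℚ) + β) / (j + 1)) :
    ∃ N : ℕ, ∀ ν : ℕ, N ≤ ν →
      x (ν + 1 + (p + 1)) - x (ν + (p + 1)) = x (ν + 1) - x ν := by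
  obtain ⟨N, hN⟩ := Int.exists_forall_add_eq_of_add_le
    ⟨0, by rintro _ ⟨ν, rfl⟩; exact excess_nonneg hrec hmin ν⟩
    fun ν hν => excess_add_le hrec p hν
  have hx : ∀ ν, N ≤ ν → x (ν + (p + 1)) = x ν + (x p + β) := by
    intro ν hν
    have h := hN ν hν
    rw [← add_assoc, excess_add_add_one, excess_self, add_zero, add_eq_left,
      mul_eq_zero] at h
    rw [← add_assoc]
    omega
  refine ⟨N, fun ν hν => ?_⟩
  rw [hx ν hν, hx (ν + 1) (by omega)]
  ring
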